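/- Consider gradient-play with barrier on integrator agents: ẏ = -F(y) - ∇φ(y) on Ω° = {y : g(y) < 0}, where F is monotone and Lipschitz, φ is the convex log-barrier whose value tends to +∞ at ∂Ω, and y* ∈ Ω° satisfies F(y*) + ∇φ(y*) = 0. Then every maximal solution with y(0) ∈ Ω° remains in Ω° for all t ≥ 0, and the function t ↦ ½‖y(t) - y*‖² is nonincreasing. -/

import Mathlib

/-!
Since `F` and `∇φ` are monotone and `F y* + ∇φ y* = 0`, the derivative
`⟪y - y*, -F y - ∇φ y⟫` of `½‖y - y*‖²` is nonpositive as long as `y` stays in `Ω°`.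
To see that it does, suppose `y` first leaves `Ω°` at time `t₁`. Along the flow
`d/dt φ(y) = ⟪∇φ, -F - ∇φ⟫ ≤ ‖F‖² / 4`, which is bounded on `[0, t₁]`, so `φ ∘ y` stays
bounded above on `[0, t₁)`; but some `g ℓ (y t)` tends to `0⁻` as `t → t₁⁻` while the
others stay bounded, so the log-barrier `φ (y t)` tends to `+∞`.
-/

open scoped RealInnerProductSpace
open Set Filter Topology

theorem exists_first_exit {X : Type*} [TopologicalSpace X] {U : Set X} (hU : IsOpen U)
    {y : ℝ → X} (hy : ContinuousOn y (Ici 0)) (h0 : y 0 ∈ U) {t : ℝ} (ht : 0 ≤ t)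
    (hyt : y t ∉ U) : ∃ t₁, 0 < t₁ ∧ y t₁ ∉ U ∧ ∀ s ∈ Ico 0 t₁, y s ∈ U := by
  set A := Ici 0 ∩ y ⁻¹' Uᶜ
  have hA : IsClosed A := hy.preimage_isClosed_of_isClosed isClosed_Ici hU.isClosed_compl
  have hbdd : BddBelow A := ⟨0, fun s hs => hs.1⟩
  obtain ⟨hpos, hexit⟩ : sInf A ∈ A := hA.csInf_mem ⟨t, ht, hyt⟩ hbdd
  refine ⟨sInf A, lt_of_le_of_ne hpos ?_, hexit, fun s hs => ?_⟩
  · rintro h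
    exact hexit (h ▸ h0)
  · by_contra hys
    exact (csInf_le hbdd ⟨hs.1, hys⟩).not_gt hs.2

theorem isOpen_setOf_forall_neg {ι X : Type*} [Finite ι] [TopologicalSpace X] {g : ι → X → ℝ}
    (hg : ∀ i, Continuous (g i)) : IsOpen {x | ∀ i, g i x < 0} := by
  simp only [ofPred_forall]
  exact isOpen_iInter_of_finite fun i => isOpen_lt (hg i) continuous_const

theorem tendsto_neg_mul_sum_log_atTop {ι α : Type*} [Fintype ι] {l : Filter α}
    {u : ι → α → ℝ} {ρ : ℝ} (hρ : 0 < ρ)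
    (hbdd : ∀ i, IsBoundedUnder (· ≤ ·) l fun a => |u i a|) {i₀ : ι}
    (hi₀ : Tendsto (u i₀) l (𝓝[>] 0)) :
    Tendsto (fun a => -ρ * ∑ i, Real.log (u i a)) l atTop := by
  classical
  choose M hM using fun i => (hbdd i).eventually_le
  -- `log x = log |x| ≤ |x|` holds for every real `x`, so no sign condition on `u i` is needed.
  have hlog_le : ∀ᶠ a in l, ∀ i, Real.log (u i a) ≤ M i :=
    (eventually_all.2 hM).mono fun a ha i =>
      (Real.log_abs (u i a) ▸ Real.log_le_self (abs_nonneg _)).trans (ha i)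
  have hsum : Tendsto (fun a => ∑ i, Real.log (u i a)) l atBot := by
    simp_rw [← Finset.add_sum_erase _ _ (Finset.mem_univ i₀)]
    exact tendsto_atBot_add_right_of_ge' _ (∑ i ∈ Finset.univ.erase i₀, M i)
      (Real.tendsto_log_nhdsGT_zero.comp hi₀)
      (hlog_le.mono fun a ha => Finset.sum_le_sum fun i _ => ha i)
  exact hsum.const_mul_atBot_of_neg (neg_neg_of_pos hρ)

noncomputable def logBarrier {ι X : Type*} [Fintype ι] (ρ : ℝ) (g : ι → X → ℝ) (x : X) : ℝ :=
  -ρ * ∑ i, Real.log (-g i x)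

section LogBarrier

variable {ι : Type*} [Fintype ι]

theorem tendsto_logBarrier_atTop {X : Type*} [TopologicalSpace X] {g : ι → X → ℝ} {ρ : ℝ}
    {x : X} {l : Filter X} [l.NeBot] (hl : l ≤ 𝓝 x) (hρ : 0 < ρ)
    (hg : ∀ i, ContinuousAt (g i) x) (hneg : ∀ᶠ z in l, ∀ i, g i z < 0) (hx : ∃ i, 0 ≤ g i x) :
    Tendsto (logBarrier ρ g) l atTop := by
  obtain ⟨i₀, hi₀⟩ := hx
  have hlim : ∀ i, Tendsto (g i) l (𝓝 (g i x)) := fun i => (hg i).tendsto.mono_left hl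
  have hzero : g i₀ x = 0 :=
    le_antisymm (le_of_tendsto (hlim i₀) (hneg.mono fun z hz => (hz i₀).le)) hi₀
  refine tendsto_neg_mul_sum_log_atTop (i₀ := i₀) hρ
    (fun i => ((hlim i).neg.abs).isBoundedUnder_le) ?_
  refine tendsto_nhdsWithin_iff.2 ⟨?_, hneg.mono fun z hz => neg_pos.2 (hz i₀)⟩
  simpa [hzero] using (hlim i₀).neg

variable {E : Type*} [NormedAddCommGroup E] [NormedSpace ℝ E] {s : Set E} {g : ι → E → ℝ}

theorem ConvexOn.neg_log_neg {f : E → ℝ} (hf : ConvexOn ℝ s f) (hneg : ∀ x ∈ s, f x < 0) :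
    ConvexOn ℝ s fun x => -Real.log (-f x) := by
  refine ⟨hf.1, fun x hx y hy a b ha hb hab => ?_⟩
  have hx' : -f x ∈ Ioi 0 := neg_pos.2 (hneg x hx)
  have hy' : -f y ∈ Ioi 0 := neg_pos.2 (hneg y hy)
  have hlog := strictConcaveOn_log_Ioi.concaveOn.2 hx' hy' ha hb hab
  have hmono : Real.log (a • -f x + b • -f y) ≤ Real.log (-f (a • x + b • y)) := by
    refine Real.log_le_log (convex_Ioi 0 hx' hy' ha hb hab) ?_
    have := hf.2 hx hy ha hb hab
    simp only [smul_eq_mul] at this ⊢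
    linarith
  simp only [smul_eq_mul] at hlog hmono ⊢
  linarith

theorem convexOn_logBarrier {ρ : ℝ} (hρ : 0 ≤ ρ) (hs : Convex ℝ s) (hg : ∀ i, ConvexOn ℝ s (g i))
    (hneg : ∀ x ∈ s, ∀ i, g i x < 0) : ConvexOn ℝ s (logBarrier ρ g) := by
  have hsum : ConvexOn ℝ s (∑ i, fun x => -Real.log (-g i x)) :=
    Finset.sum_induction _ (ConvexOn ℝ s) (fun _ _ => ConvexOn.add) (convexOn_const 0 hs)
      fun i _ => (hg i).neg_log_neg fun x hx => hneg x hx i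
  refine (hsum.smul hρ).congr fun x _ => ?_
  simp [logBarrier, Finset.sum_apply, Finset.mul_sum]

theorem differentiableAt_logBarrier {ρ : ℝ} {x : E} (hg : ∀ i, DifferentiableAt ℝ (g i) x)
    (hneg : ∀ i, g i x < 0) : DifferentiableAt ℝ (logBarrier ρ g) x := by
  unfold logBarrier
  fun_prop (disch := exact (neg_pos.2 (hneg _)).ne')

theorem DifferentiableAt.of_eqOn_logBarrier {ρ : ℝ} {φ : E → ℝ} {x : E}
    (hg : ∀ i, Differentiable ℝ (g i)) (hφ : EqOn (logBarrier ρ g) φ {x | ∀ i, g i x < 0})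
    (hx : ∀ i, g i x < 0) : DifferentiableAt ℝ φ x :=
  (differentiableAt_logBarrier (fun i => hg i x) hx).congr_of_eventuallyEq <|
    eventually_of_mem ((isOpen_setOf_forall_neg fun i => (hg i).continuous).mem_nhds hx)
      fun _ hz => (hφ hz).symm

end LogBarrier

section InnerProductSpace

variable {E : Type*} [NormedAddCommGroup E] [InnerProductSpace ℝ E]

theorem inner_neg_sub_le_norm_sq_div_four (u v : E) : ⟪u, -v - u⟫ ≤ ‖v‖ ^ 2 / 4 := by
  -- `⟪u, -v - u⟫ = ‖v‖ ^ 2 / 4 - ‖u + v / 2‖ ^ 2`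
  have h := norm_add_sq_real u ((1 / 2 : ℝ) • v)
  rw [inner_smul_right, norm_smul, mul_pow] at h
  rw [inner_sub_right, inner_neg_right, real_inner_self_eq_norm_sq]
  norm_num at h
  nlinarith [sq_nonneg ‖u + (1 / 2 : ℝ) • v‖]

theorem antitoneOn_half_norm_sub_sq {D : Set ℝ} (hD : Convex ℝ D) {y y' : ℝ → E} {c : E}
    (hy : ∀ t ∈ D, HasDerivAt y (y' t) t) (hneg : ∀ t ∈ interior D, ⟪y t - c, y' t⟫ ≤ 0) :
    AntitoneOn (fun t => 1 / 2 * ‖y t - c‖ ^ 2) D := by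
  have hderiv : ∀ t ∈ D, HasDerivAt (fun t => 1 / 2 * ‖y t - c‖ ^ 2) ⟪y t - c, y' t⟫ t :=
    fun t ht => by simpa using ((hy t ht).sub_const c).norm_sq.const_mul (1 / 2 : ℝ)
  exact antitoneOn_of_hasDerivWithinAt_nonpos hD
    (fun t ht => (hderiv t ht).continuousAt.continuousWithinAt)
    (fun t ht => (hderiv t (interior_subset ht)).hasDerivWithinAt) hneg

variable [CompleteSpace E] {s : Set E} {f : E → ℝ} {a b : E}

theorem ConvexOn.inner_gradient_sub_le (hf : ConvexOn ℝ s f) (ha : a ∈ s) (hb : b ∈ s)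
    (hfa : DifferentiableAt ℝ f a) : ⟪gradient f a, b - a⟫ ≤ f b - f a := by
  have hline : ConvexOn ℝ (AffineMap.lineMap (k := ℝ) a b ⁻¹' s)
      (f ∘ AffineMap.lineMap (k := ℝ) a b) :=
    hf.comp_affineMap _
  have hderiv : HasDerivAt (f ∘ AffineMap.lineMap (k := ℝ) a b) ⟪gradient f a, b - a⟫ 0 := by
    rw [gradient, InnerProductSpace.toDual_symm_apply]
    simpa using hfa.hasFDerivAt.comp_hasDerivAt_of_eq 0 AffineMap.hasDerivAt_lineMap (by simp)
  simpa [slope_def_field] using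
    hline.le_slope_of_hasDerivAt (by simpa using ha) (by simpa using hb) zero_lt_one hderiv

theorem ConvexOn.inner_sub_gradient_sub_nonneg (hf : ConvexOn ℝ s f) (ha : a ∈ s) (hb : b ∈ s)
    (hfa : DifferentiableAt ℝ f a) (hfb : DifferentiableAt ℝ f b) :
    0 ≤ ⟪a - b, gradient f a - gradient f b⟫ := by
  have hab := hf.inner_gradient_sub_le ha hb hfa
  have hba := hf.inner_gradient_sub_le hb ha hfb
  rw [← neg_sub a b, inner_neg_right] at hab
  rw [inner_sub_right, real_inner_comm, real_inner_comm (gradient f b)]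
  linarith

theorem bddAbove_comp_image_Ico_of_gradient_flow {F : E → E} {φ : E → ℝ} {y : ℝ → E}
    (hF : Continuous F) (hy : ∀ t, HasDerivAt y (-F (y t) - gradient φ (y t)) t) {a b : ℝ}
    (hφ : ∀ t ∈ Ico a b, DifferentiableAt ℝ φ (y t)) : BddAbove ((φ ∘ y) '' Ico a b) := by
  have hyc : Continuous y := continuous_iff_continuousAt.2 fun t => (hy t).continuousAt
  obtain ⟨K, hK⟩ := (isCompact_Icc (a := a) (b := b)).exists_bound_of_continuousOn
    (hF.comp hyc).continuousOn
  have hderiv : ∀ t ∈ Ico a b, HasDerivAt (φ ∘ y)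
      ⟪gradient φ (y t), -F (y t) - gradient φ (y t)⟫ t := fun t ht => by
    rw [gradient, InnerProductSpace.toDual_symm_apply]
    exact (hφ t ht).hasFDerivAt.comp_hasDerivAt t (hy t)
  have hslope : ∀ t ∈ interior (Ico a b), deriv (φ ∘ y) t ≤ K ^ 2 / 4 := fun t ht => by
    have ht' := interior_subset ht
    rw [(hderiv t ht').deriv]
    refine (inner_neg_sub_le_norm_sq_div_four _ _).trans ?_
    gcongr
    exact hK t (Ico_subset_Icc_self ht')
  refine ⟨φ (y a) + K ^ 2 / 4 * (b - a), forall_mem_image.2 fun t ht => ?_⟩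
  have hgrowth := (convex_Ico a b).image_sub_le_mul_sub_of_deriv_le
    (fun s hs => (hderiv s hs).continuousAt.continuousWithinAt)
    (fun s hs => (hderiv s (interior_subset hs)).differentiableAt.differentiableWithinAt)
    hslope a (left_mem_Ico.2 (ht.1.trans_lt ht.2)) t ht ht.1
  have : K ^ 2 / 4 * (t - a) ≤ K ^ 2 / 4 * (b - a) := by gcongr; exact ht.2.le
  simp only [Function.comp_apply] at hgrowth ⊢
  linarith

end InnerProductSpace

theorem forall_neg_of_logBarrier_flow {ι E : Type*} [Fintype ι] [NormedAddCommGroup E]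
    [InnerProductSpace ℝ E] [CompleteSpace E] {F : E → E} {g : ι → E → ℝ} {ρ : ℝ} {φ : E → ℝ}
    {y : ℝ → E} (hF : Continuous F) (hg : ∀ i, Differentiable ℝ (g i)) (hρ : 0 < ρ)
    (hφ : EqOn (logBarrier ρ g) φ {x | ∀ i, g i x < 0})
    (hy : ∀ t, HasDerivAt y (-F (y t) - gradient φ (y t)) t) (h0 : ∀ i, g i (y 0) < 0)
    {t : ℝ} (ht : 0 ≤ t) : ∀ i, g i (y t) < 0 := by
  have hyc : Continuous y := continuous_iff_continuousAt.2 fun t => (hy t).continuousAt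
  by_contra hyt
  obtain ⟨t₁, ht₁, hexit, hbefore⟩ := exists_first_exit
    (isOpen_setOf_forall_neg fun i => (hg i).continuous) hyc.continuousOn h0 ht hyt
  obtain ⟨B, hB⟩ := bddAbove_comp_image_Ico_of_gradient_flow hF hy
    fun s hs => .of_eqOn_logBarrier hg hφ (hbefore s hs)
  have hnear : ∀ᶠ s in 𝓝[<] t₁, s ∈ Ico 0 t₁ := Ico_mem_nhdsLT ht₁
  have hblow : Tendsto (φ ∘ y) (𝓝[<] t₁) atTop := by
    refine (tendsto_logBarrier_atTop (g := fun i => g i ∘ y) nhdsWithin_le_nhds hρ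
      (fun i => ((hg i).continuous.comp hyc).continuousAt)
      (hnear.mono fun s hs => hbefore s hs) ?_).congr' (hnear.mono fun s hs => hφ (hbefore s hs))
    simpa using hexit
  obtain ⟨s, hs, hBs⟩ := (hnear.and (hblow.eventually_gt_atTop B)).exists
  exact (hB (mem_image_of_mem _ hs)).not_gt hBs

theorem stmt14_general {m p : ℕ}
    (F : EuclideanSpace ℝ (Fin m) → EuclideanSpace ℝ (Fin m))
    (hFmono : ∀ y y', 0 ≤ ⟪y - y', F y - F y'⟫)
    (θ : NNReal) (hFLip : LipschitzWith θ F)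
    (g : Fin p → EuclideanSpace ℝ (Fin m) → ℝ)
    (hgconv : ∀ ℓ, ConvexOn ℝ Set.univ (g ℓ))
    (hgC2 : ∀ ℓ, ContDiff ℝ 2 (g ℓ))
    (ρ : ℝ) (hρ : 0 < ρ)
    (φ : EuclideanSpace ℝ (Fin m) → ℝ)
    (hφ : ∀ y, (∀ ℓ, g ℓ y < 0) → φ y = -ρ * ∑ ℓ, Real.log (-(g ℓ y)))
    (ystar : EuclideanSpace ℝ (Fin m)) (hystar : ∀ ℓ, g ℓ ystar < 0)
    (hstat : F ystar + gradient φ ystar = 0)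
    (y : ℝ → EuclideanSpace ℝ (Fin m))
    (hsol : ∀ t, HasDerivAt y (-(F (y t)) - gradient φ (y t)) t)
    (h0 : ∀ ℓ, g ℓ (y 0) < 0) :
    (∀ t, 0 ≤ t → ∀ ℓ, g ℓ (y t) < 0) ∧
      AntitoneOn (fun t => (1 / 2) * ‖y t - ystar‖ ^ 2) (Set.Ici (0 : ℝ)) := by
  set U := {z | ∀ ℓ, g ℓ z < 0}
  have hgdiff : ∀ ℓ, Differentiable ℝ (g ℓ) := fun ℓ => (hgC2 ℓ).differentiable (by norm_num)
  have hUconv : Convex ℝ U := by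
    simp only [U, ofPred_forall]
    exact convex_iInter fun ℓ => by simpa using (hgconv ℓ).convex_lt 0
  have hφU : EqOn (logBarrier ρ g) φ U := fun z hz => (hφ z hz).symm
  have hφconv : ConvexOn ℝ U φ := (convexOn_logBarrier hρ.le hUconv
    (fun ℓ => (hgconv ℓ).subset (subset_univ U) hUconv) fun _ hz => hz).congr hφU
  have hinv : ∀ t, 0 ≤ t → y t ∈ U := fun t ht =>
    forall_neg_of_logBarrier_flow hFLip.continuous hgdiff hρ hφU hsol h0 ht
  refine ⟨hinv, antitoneOn_half_norm_sub_sq (convex_Ici 0) (fun t _ => hsol t) fun t ht => ?_⟩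
  have hyU := hinv t (interior_subset ht)
  have hφmono := hφconv.inner_sub_gradient_sub_nonneg hyU hystar
    (.of_eqOn_logBarrier hgdiff hφU hyU) (.of_eqOn_logBarrier hgdiff hφU hystar)
  have hsplit : -F (y t) - gradient φ (y t) = -((F (y t) - F ystar)
      + (gradient φ (y t) - gradient φ ystar)) - (F ystar + gradient φ ystar) := by abel
  rw [hsplit, hstat, sub_zero, inner_neg_right, inner_add_right]
  linarith [hFmono (y t) ystar]

/-- gradient-play with log-barrier on integrator agents:
`ẏ = -F(y) - ∇φ(y)`. Every solution starting in the interior feasible set stays there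
for all `t ≥ 0`, and `t ↦ ½‖y(t) - y*‖²` is nonincreasing on `[0, ∞)`. -/
theorem stmt14 {m p : ℕ}
    (F : EuclideanSpace ℝ (Fin m) → EuclideanSpace ℝ (Fin m))
    (hFmono : ∀ y y', 0 ≤ ⟪y - y', F y - F y'⟫)
    (θ : NNReal) (hFLip : LipschitzWith θ F)
    (g : Fin p → EuclideanSpace ℝ (Fin m) → ℝ)
    (hgconv : ∀ ℓ, ConvexOn ℝ Set.univ (g ℓ))
    (hgC2 : ∀ ℓ, ContDiff ℝ 2 (g ℓ))
    (hcompact : IsCompact {y : EuclideanSpace ℝ (Fin m) | ∀ ℓ, g ℓ y ≤ 0})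
    (hslater : ∃ yhat, ∀ ℓ, g ℓ yhat < 0)
    (ρ : ℝ) (hρ : 0 < ρ)
    (φ : EuclideanSpace ℝ (Fin m) → ℝ)
    (hφ : ∀ y, (∀ ℓ, g ℓ y < 0) → φ y = -ρ * ∑ ℓ, Real.log (-(g ℓ y)))
    (ystar : EuclideanSpace ℝ (Fin m)) (hystar : ∀ ℓ, g ℓ ystar < 0)
    (hstat : F ystar + gradient φ ystar = 0)
    (y : ℝ → EuclideanSpace ℝ (Fin m))
    (hsol : ∀ t, HasDerivAt y (-(F (y t)) - gradient φ (y t)) t)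
    (h0 : ∀ ℓ, g ℓ (y 0) < 0) :
    (∀ t, 0 ≤ t → ∀ ℓ, g ℓ (y t) < 0) ∧
      AntitoneOn (fun t => (1 / 2) * ‖y t - ystar‖ ^ 2) (Set.Ici (0 : ℝ)) :=
  stmt14_general F hFmono θ hFLip g hgconv hgC2 ρ hρ φ hφ ystar hystar hstat y hsol h0
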